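/- arXiv:2012.08324 — 2 statements merged into one kernel-verified Lean document; each statement's English description precedes it below -/
import Mathlib

section
/- Let C be a 2-copula satisfying C(v,v) < v for all v ∈ (0,1). Then C is idempotent (C * C = C) and stochastically monotone (u ↦ C(u,v) concave for each v, or convex for each v) if and only if C(u,v) = uv for all u,v. -/
open MeasureTheory Set Filter

def IsCopula (C : ℝ → ℝ → ℝ) : Prop :=
  (∀ u ∈ Icc (0:ℝ) 1, C u 0 = 0 ∧ C u 1 = u) ∧
  (∀ v ∈ Icc (0:ℝ) 1, C 0 v = 0 ∧ C 1 v = v) ∧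
  (∀ u₁ u₂ v₁ v₂ : ℝ, u₁ ∈ Icc (0:ℝ) 1 → u₂ ∈ Icc (0:ℝ) 1 →
    v₁ ∈ Icc (0:ℝ) 1 → v₂ ∈ Icc (0:ℝ) 1 → u₁ ≤ u₂ → v₁ ≤ v₂ →
    0 ≤ C u₂ v₂ - C u₂ v₁ - C u₁ v₂ + C u₁ v₁)

/-- Markov product of two copulas: (C₁ * C₂)(u,v) = ∫₀¹ ∂₂C₁(u,t) ∂₁C₂(t,v) dt. -/
noncomputable def MarkovProduct (C₁ C₂ : ℝ → ℝ → ℝ) (u v : ℝ) : ℝ :=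
  ∫ t in (0:ℝ)..1, deriv (fun s => C₁ u s) t * deriv (fun s => C₂ s v) t

/-- Stochastically increasing in the first component: u ↦ C(u,v) is concave for each v. -/
def StochIncr (C : ℝ → ℝ → ℝ) : Prop :=
  ∀ v ∈ Icc (0:ℝ) 1, ConcaveOn ℝ (Icc (0:ℝ) 1) (fun u => C u v)

/-- Stochastically decreasing in the first component: u ↦ C(u,v) is convex for each v. -/
def StochDecr (C : ℝ → ℝ → ℝ) : Prop :=
  ∀ v ∈ Icc (0:ℝ) 1, ConvexOn ℝ (Icc (0:ℝ) 1) (fun u => C u v)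

/-!
Fix `v` and let `β = ∂₁C(·, v)`. Stochastic monotonicity makes `β` or `1 - β` almost everywhere
equal to a monotone function `b` on `(0, 1)` (a right derivative of a convex function). For each `u`
the gap `Φᵤ x = min u x - C u x` to the upper Fréchet–Hoeffding bound is nonnegative and vanishes
at `x = 1`, and idempotence says exactly that its derivative is orthogonal to `β`, hence to `b`.
The layer-cake formula turns this orthogonality into `∫₀¹ Φᵤ (τ l) dl = 0`, where `τ l` is the left
end of the level set `{b > l}`. If `b` were not constant, a positive measure of levels `l` would
have `τ l ∈ (0, 1)`, and one of them satisfies `C q (τ l) = min q (τ l)` for every rational `q`,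
contradicting `C x x < x`. Hence `β` is almost everywhere constant and `C u v = u v`.
-/

open scoped Topology

section MonotoneSlopes

variable {g : ℝ → ℝ}

lemma lipschitzOnWith_one_of_monotoneOn_sub {s : Set ℝ} (hg : MonotoneOn g s)
    (hg' : MonotoneOn (fun t => t - g t) s) : LipschitzOnWith 1 g s := by
  refine LipschitzOnWith.of_dist_le_mul fun x hx y hy => ?_
  rw [NNReal.coe_one, one_mul, Real.dist_eq, Real.dist_eq]
  rcases le_total x y with hxy | hxy
  · have h1 : g x ≤ g y := hg hx hy hxy
    have h2 : x - g x ≤ y - g y := hg' hx hy hxy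
    rw [abs_of_nonpos (by linarith), abs_of_nonpos (by linarith)]
    linarith
  · have h1 : g y ≤ g x := hg hy hx hxy
    have h2 : y - g y ≤ x - g x := hg' hy hx hxy
    rw [abs_of_nonneg (by linarith), abs_of_nonneg (by linarith)]
    linarith

lemma deriv_mem_Icc_of_monotoneOn_sub {s : Set ℝ} (hg : MonotoneOn g s)
    (hg' : MonotoneOn (fun t => t - g t) s) {x : ℝ} (hx : s ∈ 𝓝 x) : deriv g x ∈ Icc 0 1 := by
  refine ⟨?_, ?_⟩
  · rw [← derivWithin_of_mem_nhds hx]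
    exact hg.derivWithin_nonneg
  · have h := norm_deriv_le_of_lipschitzOn hx (lipschitzOnWith_one_of_monotoneOn_sub hg hg')
    rw [Real.norm_eq_abs, NNReal.coe_one] at h
    exact (le_abs_self _).trans h

lemma rightDeriv_mem_Icc_of_convexOn {a b : ℝ} (hconv : ConvexOn ℝ (Icc a b) g)
    (hg : MonotoneOn g (Icc a b)) (hg' : MonotoneOn (fun t => t - g t) (Icc a b)) {x : ℝ}
    (hx : x ∈ Ioo a b) : derivWithin g (Ioi x) x ∈ Icc 0 1 := by
  refine ⟨?_, ?_⟩
  · rw [← derivWithin_inter (Iio_mem_nhds hx.2), Ioi_inter_Iio]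
    exact (hg.mono (Ioo_subset_Icc_self.trans (Icc_subset_Icc hx.1.le le_rfl))).derivWithin_nonneg
  · have hb : b ∈ Icc a b := right_mem_Icc.2 (hx.1.trans hx.2).le
    have hslope : g b - g x ≤ b - x := by
      have := hg' (Ioo_subset_Icc_self hx) hb hx.2.le
      simp only at this
      linarith
    calc derivWithin g (Ioi x) x ≤ slope g x b :=
          hconv.rightDeriv_le_slope_of_mem_interior (by rwa [interior_Icc]) hb hx.2
      _ ≤ 1 := by
          rw [slope_def_field, div_le_one (sub_pos.2 hx.2)]
          exact hslope

lemma MonotoneOn.ae_differentiableAt_Ioo {a b : ℝ} (hg : MonotoneOn g (Ioo a b)) :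
    ∀ᵐ t ∂volume.restrict (Ioo a b), DifferentiableAt ℝ g t := by
  filter_upwards [hg.ae_differentiableWithinAt measurableSet_Ioo,
    ae_restrict_mem measurableSet_Ioo] with t hd ht
  exact hd.differentiableAt (Ioo_mem_nhds ht.1 ht.2)

/-- The right derivative is a monotone version of `deriv g`. -/
lemma exists_monotoneOn_ae_eq_deriv (hconv : ConvexOn ℝ (Icc 0 1) g)
    (hg : MonotoneOn g (Icc 0 1)) (hg' : MonotoneOn (fun t => t - g t) (Icc 0 1)) :
    ∃ b : ℝ → ℝ, Measurable b ∧ MonotoneOn b (Ioo 0 1) ∧ (∀ t ∈ Ioo 0 1, b t ∈ Icc 0 1) ∧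
      ∀ᵐ t ∂volume.restrict (Ioo 0 1), deriv g t = b t := by
  refine ⟨fun t => derivWithin g (Ioi t) t, measurable_derivWithin_Ioi g, ?_,
    fun t ht => rightDeriv_mem_Icc_of_convexOn hconv hg hg' ht, ?_⟩
  · simpa only [interior_Icc] using hconv.monotoneOn_rightDeriv
  · filter_upwards [(hg.mono Ioo_subset_Icc_self).ae_differentiableAt_Ioo] with t hd
    exact (hd.derivWithin (uniqueDiffWithinAt_Ioi t)).symm

end MonotoneSlopes

section LayerCake

variable {α : Type*} [MeasurableSpace α] {μ : Measure α} {ψ b : α → ℝ}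

lemma setIntegral_lt_eq_integral_indicator (hb : Measurable b) (l : ℝ) :
    ∫ t in {t | l < b t}, ψ t ∂μ = ∫ t, {t | l < b t}.indicator ψ t ∂μ :=
  (integral_indicator (hb measurableSet_Ioi)).symm

lemma integrable_uncurry_indicator_lt [SFinite μ] (hψ : Integrable ψ μ) (hb : Measurable b) :
    Integrable (Function.uncurry fun l t => {t | l < b t}.indicator ψ t)
      ((volume.restrict (Ioo (0:ℝ) 1)).prod μ) := by
  have hs : MeasurableSet {p : ℝ × α | p.1 < b p.2} :=
    measurableSet_lt measurable_fst (hb.comp measurable_snd)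
  refine ((hψ.comp_snd _).indicator hs).congr (Eventually.of_forall fun p => ?_)
  simp [Set.indicator_apply, Function.uncurry]

lemma integral_mul_eq_integral_setIntegral_lt [SFinite μ] (hψ : Integrable ψ μ) (hb : Measurable b)
    (hb01 : ∀ᵐ t ∂μ, b t ∈ Icc 0 1) :
    ∫ t, ψ t * b t ∂μ = ∫ l in Ioo 0 1, ∫ t in {t | l < b t}, ψ t ∂μ := by
  simp_rw [setIntegral_lt_eq_integral_indicator hb]
  rw [integral_integral_swap (integrable_uncurry_indicator_lt hψ hb)]
  refine integral_congr_ae ?_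
  filter_upwards [hb01] with t ht
  have hlevel : (fun l => {t | l < b t}.indicator ψ t) = (Iio (b t)).indicator fun _ => ψ t := by
    ext l
    simp [Set.indicator_apply]
  rw [hlevel, integral_indicator_const _ measurableSet_Iio, measureReal_restrict_apply
    measurableSet_Iio, Iio_inter_Ioo, min_eq_left ht.2, Real.volume_real_Ioo_of_le ht.1,
    sub_zero, smul_eq_mul, mul_comm]

lemma integrableOn_setIntegral_lt [SFinite μ] (hψ : Integrable ψ μ) (hb : Measurable b) :
    IntegrableOn (fun l => ∫ t in {t | l < b t}, ψ t ∂μ) (Ioo 0 1) := by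
  simp_rw [setIntegral_lt_eq_integral_indicator hb]
  exact (integrable_uncurry_indicator_lt hψ hb).integral_prod_left

end LayerCake

/-- The left end of `{t ∈ (0, 1) | l < b t}`, which is an interval when `b` is monotone;
it is `1` when that set is empty. -/
noncomputable def levelInf (b : ℝ → ℝ) (l : ℝ) : ℝ :=
  sInf (insert 1 ({t | l < b t} ∩ Ioo 0 1))

section levelInf

variable {b : ℝ → ℝ} {l : ℝ}

lemma bddBelow_insert_level : BddBelow (insert 1 ({t | l < b t} ∩ Ioo (0:ℝ) 1)) :=
  ⟨0, by rintro r (rfl | hr); exacts [zero_le_one, hr.2.1.le]⟩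

lemma levelInf_mem_Icc : levelInf b l ∈ Icc 0 1 :=
  ⟨le_csInf (insert_nonempty _ _) (by rintro r (rfl | hr); exacts [zero_le_one, hr.2.1.le]),
    csInf_le bddBelow_insert_level (mem_insert _ _)⟩

lemma levelInf_le {t : ℝ} (ht : t ∈ Ioo 0 1) (hl : l < b t) : levelInf b l ≤ t :=
  csInf_le bddBelow_insert_level (mem_insert_of_mem _ ⟨hl, ht⟩)

lemma le_levelInf (hb : MonotoneOn b (Ioo 0 1)) {s : ℝ} (hs : s ∈ Ioo 0 1) (hl : b s < l) :
    s ≤ levelInf b l := by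
  refine le_csInf (insert_nonempty _ _) ?_
  rintro r (rfl | ⟨hr, hr01⟩)
  · exact hs.2.le
  · by_contra! hrs
    exact (hb hr01 hs hrs.le).not_gt (hl.trans hr)

lemma level_ae_eq_Ioo_levelInf (hb : MonotoneOn b (Ioo 0 1)) :
    ({t | l < b t} ∩ Ioo 0 1 : Set ℝ) =ᵐ[volume] Ioo (levelInf b l) 1 := by
  have hsub : Ioo (levelInf b l) 1 ⊆ {t | l < b t} ∩ Ioo 0 1 := by
    intro r hr
    obtain ⟨w, hw, hwr⟩ := exists_lt_of_csInf_lt (insert_nonempty _ _) hr.1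
    rcases hw with rfl | ⟨hw, hw01⟩
    · exact absurd hr.2 hwr.not_gt
    have hr01 : r ∈ Ioo 0 1 := ⟨hw01.1.trans hwr, hr.2⟩
    exact ⟨hw.trans_le (hb hw01 hr01 hwr.le), hr01⟩
  have hsup : {t | l < b t} ∩ Ioo 0 1 ⊆ Icc (levelInf b l) 1 :=
    fun r hr => ⟨levelInf_le hr.2 hr.1, hr.2.2.le⟩
  have hle : ({t | l < b t} ∩ Ioo 0 1 : Set ℝ) ≤ᵐ[volume] Icc (levelInf b l) 1 :=
    Eventually.of_forall fun r hr => hsup hr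
  exact (hle.trans Ioo_ae_eq_Icc.symm.le).antisymm (Eventually.of_forall fun r hr => hsub hr)

end levelInf

/-- For monotone `b` the layer-cake formula reads `∫ ψ b = - ∫₀¹ Φ (levelInf b l) dl`, where `Φ` is
the primitive of `ψ`. -/
lemma ae_integral_levelInf_eq_zero {ψ b : ℝ → ℝ} (hψ : IntegrableOn ψ (Ioo 0 1))
    (hb : Measurable b) (hmono : MonotoneOn b (Ioo 0 1)) (hb01 : ∀ t ∈ Ioo 0 1, b t ∈ Icc 0 1)
    (hnonneg : ∀ x ∈ Icc (0:ℝ) 1, 0 ≤ ∫ t in 0..x, ψ t) (hone : ∫ t in (0:ℝ)..1, ψ t = 0)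
    (horth : ∫ t in Ioo 0 1, ψ t * b t = 0) :
    ∀ᵐ l ∂volume.restrict (Ioo 0 1), ∫ t in 0..levelInf b l, ψ t = 0 := by
  have hii : IntervalIntegrable ψ volume 0 1 := by
    rw [intervalIntegrable_iff_integrableOn_Ioo_of_le zero_le_one]
    exact hψ
  have hlevel : ∀ l, ∫ t in {t | l < b t}, ψ t ∂volume.restrict (Ioo 0 1) =
      -∫ t in 0..levelInf b l, ψ t := by
    intro l
    have hτ := levelInf_mem_Icc (b := b) (l := l)
    rw [Measure.restrict_restrict (s := {t | l < b t}) (hb measurableSet_Ioi),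
      setIntegral_congr_set (level_ae_eq_Ioo_levelInf hmono), ← integral_Ioc_eq_integral_Ioo,
      ← intervalIntegral.integral_of_le hτ.2, ← intervalIntegral.integral_interval_sub_left hii
        (hii.mono_set (by rw [uIcc_of_le zero_le_one, uIcc_of_le hτ.1]
                          exact Icc_subset_Icc le_rfl hτ.2)),
      hone, zero_sub]
  have hb01' : ∀ᵐ t ∂volume.restrict (Ioo 0 1), b t ∈ Icc 0 1 :=
    (ae_restrict_iff' measurableSet_Ioo).2 (Eventually.of_forall hb01)
  have hint := integrableOn_setIntegral_lt hψ hb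
  rw [integral_mul_eq_integral_setIntegral_lt hψ hb hb01'] at horth
  simp_rw [hlevel] at horth hint
  rw [integral_neg, neg_eq_zero] at horth
  have hint' : IntegrableOn (fun l => ∫ t in 0..levelInf b l, ψ t) (Ioo 0 1) := by
    simpa using hint.fun_neg
  exact (integral_eq_zero_iff_of_nonneg (fun l => hnonneg _ levelInf_mem_Icc) hint').1 horth

/-- The derivative of `x ↦ min u x - C u x`, the gap between `C u` and the upper
Fréchet–Hoeffding bound. -/
noncomputable def gapDensity (C : ℝ → ℝ → ℝ) (u t : ℝ) : ℝ :=
  (Iio u).indicator (fun _ => 1) t - deriv (C u) t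

namespace IsCopula

variable {C : ℝ → ℝ → ℝ} {u v : ℝ}

lemma swap (hC : IsCopula C) : IsCopula fun u v => C v u :=
  ⟨hC.2.1, hC.1, fun u₁ u₂ v₁ v₂ hu₁ hu₂ hv₁ hv₂ hu hv => by
    have := hC.2.2 v₁ v₂ u₁ u₂ hv₁ hv₂ hu₁ hu₂ hv hu
    linarith⟩

lemma monotoneOn_left (hC : IsCopula C) (hv : v ∈ Icc 0 1) :
    MonotoneOn (fun u => C u v) (Icc 0 1) := by
  intro x hx y hy hxy
  have := hC.2.2 x y 0 v hx hy (left_mem_Icc.2 zero_le_one) hv hxy hv.1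
  rw [(hC.1 x hx).1, (hC.1 y hy).1] at this
  simp only
  linarith

lemma monotoneOn_sub_left (hC : IsCopula C) (hv : v ∈ Icc 0 1) :
    MonotoneOn (fun u => u - C u v) (Icc 0 1) := by
  intro x hx y hy hxy
  have := hC.2.2 x y v 1 hx hy hv (right_mem_Icc.2 zero_le_one) hxy hv.2
  rw [(hC.1 x hx).2, (hC.1 y hy).2] at this
  simp only
  linarith

lemma monotoneOn_right (hC : IsCopula C) (hu : u ∈ Icc 0 1) : MonotoneOn (C u) (Icc 0 1) :=
  hC.swap.monotoneOn_left hu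

lemma apply_le_min (hC : IsCopula C) (hu : u ∈ Icc 0 1) (hv : v ∈ Icc 0 1) :
    C u v ≤ min u v := by
  have h1 : (0:ℝ) ≤ 1 := zero_le_one
  refine le_min ?_ ?_
  · simpa only [(hC.1 u hu).2] using hC.monotoneOn_right hu hv (right_mem_Icc.2 h1) hv.2
  · simpa only [(hC.2.1 v hv).2] using hC.monotoneOn_left hv hu (right_mem_Icc.2 h1) hu.2

lemma lipschitzOnWith_left (hC : IsCopula C) (hv : v ∈ Icc 0 1) :
    LipschitzOnWith 1 (fun u => C u v) (Icc 0 1) :=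
  lipschitzOnWith_one_of_monotoneOn_sub (hC.monotoneOn_left hv) (hC.monotoneOn_sub_left hv)

lemma integral_deriv_left (hC : IsCopula C) (hv : v ∈ Icc 0 1) {x : ℝ} (hx : x ∈ Icc 0 1) :
    ∫ t in 0..x, deriv (fun u => C u v) t = C x v := by
  have hlip : LipschitzOnWith 1 (fun u => C u v) (uIcc 0 x) := by
    rw [uIcc_of_le hx.1]
    exact (hC.lipschitzOnWith_left hv).mono (Icc_subset_Icc le_rfl hx.2)
  rw [hlip.absolutelyContinuousOnInterval.integral_deriv_eq_sub, (hC.2.1 v hv).1, sub_zero]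

lemma integral_deriv_right (hC : IsCopula C) (hu : u ∈ Icc 0 1) {x : ℝ} (hx : x ∈ Icc 0 1) :
    ∫ t in 0..x, deriv (C u) t = C u x :=
  hC.swap.integral_deriv_left hu hx

lemma integrableOn_deriv_left (hC : IsCopula C) (hv : v ∈ Icc 0 1) :
    IntegrableOn (deriv fun u => C u v) (Ioo 0 1) := by
  rw [← intervalIntegrable_iff_integrableOn_Ioo_of_le zero_le_one]
  refine MonotoneOn.intervalIntegrable_deriv ?_
  rw [uIcc_of_le zero_le_one]
  exact hC.monotoneOn_left hv

lemma integrableOn_deriv_right (hC : IsCopula C) (hu : u ∈ Icc 0 1) :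
    IntegrableOn (deriv (C u)) (Ioo 0 1) :=
  hC.swap.integrableOn_deriv_left hu

lemma ae_norm_deriv_left_le_one (hC : IsCopula C) (hv : v ∈ Icc 0 1) :
    ∀ᵐ t ∂volume.restrict (Ioo 0 1), ‖deriv (fun u => C u v) t‖ ≤ 1 := by
  refine (ae_restrict_iff' measurableSet_Ioo).2 (Eventually.of_forall fun t ht => ?_)
  have h := deriv_mem_Icc_of_monotoneOn_sub (hC.monotoneOn_left hv) (hC.monotoneOn_sub_left hv)
    (Icc_mem_nhds ht.1 ht.2)
  rw [Real.norm_eq_abs, abs_le]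
  exact ⟨by linarith [h.1], h.2⟩

lemma exists_rat_ne_min (hC : IsCopula C) (hdiag : ∀ v ∈ Ioo (0:ℝ) 1, C v v < v) {x : ℝ}
    (hx : x ∈ Ioo 0 1) : ∃ q : ℚ, (q:ℝ) ∈ Icc 0 1 ∧ C q x ≠ min (q:ℝ) x := by
  obtain ⟨q, hq1, hq2⟩ := exists_rat_btwn (max_lt (hdiag x hx) hx.1)
  have hq : (q:ℝ) ∈ Icc 0 1 := ⟨(le_max_right _ _).trans hq1.le, hq2.le.trans hx.2.le⟩
  refine ⟨q, hq, fun h => ?_⟩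
  have hmono : C q x ≤ C x x :=
    hC.monotoneOn_left (Ioo_subset_Icc_self hx) hq (Ioo_subset_Icc_self hx) hq2.le
  rw [h, min_eq_left hq2.le] at hmono
  linarith [le_max_left (C x x) 0]

lemma integrableOn_gapDensity (hC : IsCopula C) (hu : u ∈ Icc 0 1) :
    IntegrableOn (gapDensity C u) (Ioo 0 1) :=
  ((integrable_const 1).indicator measurableSet_Iio).sub (hC.integrableOn_deriv_right hu)

lemma integral_gapDensity (hC : IsCopula C) (hu : u ∈ Icc 0 1) {x : ℝ} (hx : x ∈ Icc 0 1) :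
    ∫ t in 0..x, gapDensity C u t = min u x - C u x := by
  have hx' : uIcc 0 x ⊆ Icc 0 1 := by
    rw [uIcc_of_le hx.1]
    exact Icc_subset_Icc le_rfl hx.2
  have hderiv : IntervalIntegrable (deriv (C u)) volume 0 x :=
    MonotoneOn.intervalIntegrable_deriv ((hC.monotoneOn_right hu).mono hx')
  have hind : IntervalIntegrable (fun t => (Iio u).indicator (fun _ => (1:ℝ)) t) volume 0 x :=
    (intervalIntegrable_iff_integrableOn_Ioo_of_le hx.1).2
      ((integrable_const 1).indicator measurableSet_Iio)
  simp only [gapDensity]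
  rw [intervalIntegral.integral_sub hind hderiv, hC.integral_deriv_right hu hx,
    intervalIntegral.integral_of_le hx.1, integral_Ioc_eq_integral_Ioo,
    integral_indicator_const _ measurableSet_Iio, measureReal_restrict_apply measurableSet_Iio,
    Iio_inter_Ioo, Real.volume_real_Ioo_of_le (le_min hu.1 hx.1), sub_zero, smul_eq_mul, mul_one]

lemma integral_gapDensity_mul_deriv_left (hC : IsCopula C) (hu : u ∈ Icc 0 1)
    (hv : v ∈ Icc 0 1) (hidem : MarkovProduct C C u v = C u v) :
    ∫ t in Ioo 0 1, gapDensity C u t * deriv (fun s => C s v) t = 0 := by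
  have hβ := hC.ae_norm_deriv_left_le_one hv
  have hβm : AEStronglyMeasurable (deriv fun s => C s v) (volume.restrict (Ioo 0 1)) :=
    (measurable_deriv _).aestronglyMeasurable
  have hind : ∫ t in Ioo 0 1, (Iio u).indicator (fun _ => 1) t * deriv (fun s => C s v) t =
      C u v := by
    simp_rw [← indicator_mul_left, one_mul]
    rw [integral_indicator measurableSet_Iio, Measure.restrict_restrict measurableSet_Iio,
      Iio_inter_Ioo, min_eq_left hu.2, ← integral_Ioc_eq_integral_Ioo,
      ← intervalIntegral.integral_of_le hu.1, hC.integral_deriv_left hv hu]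
  have hmarkov : ∫ t in Ioo 0 1, deriv (C u) t * deriv (fun s => C s v) t = C u v := by
    rw [← hidem, MarkovProduct, intervalIntegral.integral_of_le zero_le_one,
      integral_Ioc_eq_integral_Ioo]
  simp_rw [gapDensity, sub_mul]
  rw [integral_sub, hind, hmarkov, sub_self]
  · exact ((hC.integrableOn_deriv_left hv).bdd_mul
      ((measurable_const.indicator measurableSet_Iio).aestronglyMeasurable)
      (c := 1) (Eventually.of_forall fun t => by
        rw [Set.indicator_apply]; split_ifs <;> simp))
  · exact (hC.integrableOn_deriv_right hu).mul_bdd hβm hβ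

lemma integral_gapDensity_eq_zero (hC : IsCopula C) (hu : u ∈ Icc 0 1) :
    ∫ t in Ioo 0 1, gapDensity C u t = 0 := by
  rw [← integral_Ioc_eq_integral_Ioo, ← intervalIntegral.integral_of_le zero_le_one,
    hC.integral_gapDensity hu (right_mem_Icc.2 zero_le_one), min_eq_left hu.2, (hC.1 u hu).2,
    sub_self]

lemma integral_gapDensity_mul_one_sub_deriv_left (hC : IsCopula C) (hu : u ∈ Icc 0 1)
    (hv : v ∈ Icc 0 1) (hidem : MarkovProduct C C u v = C u v) :
    ∫ t in Ioo 0 1, gapDensity C u t * (1 - deriv (fun s => C s v) t) = 0 := by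
  have hψ := hC.integrableOn_gapDensity hu
  simp_rw [mul_sub, mul_one]
  rw [integral_sub hψ (hψ.mul_bdd (measurable_deriv _).aestronglyMeasurable
    (hC.ae_norm_deriv_left_le_one hv)), hC.integral_gapDensity_eq_zero hu,
    hC.integral_gapDensity_mul_deriv_left hu hv hidem, sub_zero]

lemma eq_of_integral_gapDensity_mul_eq_zero (hC : IsCopula C)
    (hdiag : ∀ v ∈ Ioo (0:ℝ) 1, C v v < v) {b : ℝ → ℝ} (hb : Measurable b)
    (hmono : MonotoneOn b (Ioo 0 1)) (hb01 : ∀ t ∈ Ioo 0 1, b t ∈ Icc 0 1)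
    (horth : ∀ u ∈ Icc (0:ℝ) 1, ∫ t in Ioo 0 1, gapDensity C u t * b t = 0)
    {s t : ℝ} (hs : s ∈ Ioo 0 1) (ht : t ∈ Ioo 0 1) : b s = b t := by
  wlog hst : s ≤ t generalizing s t
  · exact (this ht hs (le_of_not_ge hst)).symm
  by_contra hne
  have hlt : b s < b t := (hmono hs ht hst).lt_of_ne hne
  have hgap : ∀ᵐ l ∂volume.restrict (Ioo 0 1), ∀ q : ℚ, (q:ℝ) ∈ Icc 0 1 →
      C q (levelInf b l) = min (q:ℝ) (levelInf b l) := by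
    refine ae_all_iff.2 fun q => ?_
    by_cases hq : (q:ℝ) ∈ Icc 0 1
    · have h1 : (1:ℝ) ∈ Icc 0 1 := right_mem_Icc.2 zero_le_one
      filter_upwards [ae_integral_levelInf_eq_zero (hC.integrableOn_gapDensity hq) hb hmono hb01
        (fun x hx => by rw [hC.integral_gapDensity hq hx]; linarith [hC.apply_le_min hq hx])
        (by rw [hC.integral_gapDensity hq h1, min_eq_left hq.2, (hC.1 q hq).2, sub_self])
        (horth q hq)] with l hl _
      rw [hC.integral_gapDensity hq levelInf_mem_Icc] at hl
      linarith
    · exact Eventually.of_forall fun _ h => absurd h hq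
  have hsub : Ioo (b s) (b t) ⊆ Ioo 0 1 := Ioo_subset_Ioo (hb01 s hs).1 (hb01 t ht).2
  have : (ae (volume.restrict (Ioo (b s) (b t)))).NeBot := by
    rw [ae_restrict_neBot, Real.volume_Ioo]
    simpa using hlt
  obtain ⟨l, hl, hlq⟩ := ((ae_restrict_mem measurableSet_Ioo).and
    (ae_restrict_of_ae_restrict_of_subset hsub hgap)).exists
  have hτ : levelInf b l ∈ Ioo 0 1 :=
    ⟨hs.1.trans_le (le_levelInf hmono hs hl.1), (levelInf_le ht hl.2).trans_lt ht.2⟩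
  obtain ⟨q, hq, hne⟩ := hC.exists_rat_ne_min hdiag hτ
  exact hne (hlq q hq)

lemma eq_mul_of_ae_deriv_left_eq (hC : IsCopula C) (hv : v ∈ Icc 0 1) {c : ℝ}
    (hc : ∀ᵐ t ∂volume.restrict (Ioo 0 1), deriv (fun s => C s v) t = c) (hu : u ∈ Icc 0 1) :
    C u v = u * v := by
  have hlin : ∀ x ∈ Icc (0:ℝ) 1, C x v = x * c := by
    intro x hx
    rw [← hC.integral_deriv_left hv hx, intervalIntegral.integral_of_le hx.1,
      integral_Ioc_eq_integral_Ioo,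
      integral_congr_ae (ae_restrict_of_ae_restrict_of_subset (Ioo_subset_Ioo_right hx.2) hc),
      setIntegral_const, Real.volume_real_Ioo_of_le hx.1, sub_zero, smul_eq_mul]
  have hcv : c = v := by
    simpa [(hC.2.1 v hv).2] using (hlin 1 (right_mem_Icc.2 zero_le_one)).symm
  rw [hlin u hu, hcv]

lemma eq_mul_of_convexOn_left (hC : IsCopula C) (hdiag : ∀ v ∈ Ioo (0:ℝ) 1, C v v < v)
    (hidem : ∀ u ∈ Icc (0:ℝ) 1, MarkovProduct C C u v = C u v) (hv : v ∈ Icc 0 1)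
    (hconv : ConvexOn ℝ (Icc 0 1) fun u => C u v) (hu : u ∈ Icc 0 1) : C u v = u * v := by
  obtain ⟨b, hb, hmono, hb01, hβ⟩ :=
    exists_monotoneOn_ae_eq_deriv hconv (hC.monotoneOn_left hv) (hC.monotoneOn_sub_left hv)
  have horth : ∀ u ∈ Icc (0:ℝ) 1, ∫ t in Ioo 0 1, gapDensity C u t * b t = 0 := fun u hu => by
    refine (integral_congr_ae ?_).trans (hC.integral_gapDensity_mul_deriv_left hu hv (hidem u hu))
    filter_upwards [hβ] with t ht
    rw [ht]
  have half : (1 / 2 : ℝ) ∈ Ioo 0 1 := by norm_num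
  refine hC.eq_mul_of_ae_deriv_left_eq hv (c := b (1 / 2)) ?_ hu
  filter_upwards [hβ, ae_restrict_mem measurableSet_Ioo] with t ht htI
  rw [ht, hC.eq_of_integral_gapDensity_mul_eq_zero hdiag hb hmono hb01 horth htI half]

lemma eq_mul_of_concaveOn_left (hC : IsCopula C) (hdiag : ∀ v ∈ Ioo (0:ℝ) 1, C v v < v)
    (hidem : ∀ u ∈ Icc (0:ℝ) 1, MarkovProduct C C u v = C u v) (hv : v ∈ Icc 0 1)
    (hconc : ConcaveOn ℝ (Icc 0 1) fun u => C u v) (hu : u ∈ Icc 0 1) : C u v = u * v := by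
  have hconv : ConvexOn ℝ (Icc 0 1) fun u => u - C u v := (convexOn_id (convex_Icc 0 1)).sub hconc
  have hmono' : MonotoneOn (fun t => t - (t - C t v)) (Icc 0 1) := by
    simpa only [sub_sub_cancel] using hC.monotoneOn_left hv
  obtain ⟨b, hb, hmono, hb01, hβ⟩ :=
    exists_monotoneOn_ae_eq_deriv hconv (hC.monotoneOn_sub_left hv) hmono'
  have hβ' : ∀ᵐ t ∂volume.restrict (Ioo 0 1), deriv (fun s => C s v) t = 1 - b t := by
    filter_upwards [hβ, ((hC.monotoneOn_left hv).mono Ioo_subset_Icc_self).ae_differentiableAt_Ioo]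
      with t ht hd
    rw [← ht, deriv_fun_sub differentiableAt_fun_id hd, deriv_id'']
    ring
  have horth : ∀ u ∈ Icc (0:ℝ) 1, ∫ t in Ioo 0 1, gapDensity C u t * b t = 0 := fun u hu => by
    refine (integral_congr_ae ?_).trans
      (hC.integral_gapDensity_mul_one_sub_deriv_left hu hv (hidem u hu))
    filter_upwards [hβ'] with t ht
    rw [ht, sub_sub_cancel]
  have half : (1 / 2 : ℝ) ∈ Ioo 0 1 := by norm_num
  refine hC.eq_mul_of_ae_deriv_left_eq hv (c := 1 - b (1 / 2)) ?_ hu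
  filter_upwards [hβ', ae_restrict_mem measurableSet_Ioo] with t ht htI
  rw [ht, hC.eq_of_integral_gapDensity_mul_eq_zero hdiag hb hmono hb01 horth htI half]

end IsCopula

lemma markovProduct_self_eq_mul {C : ℝ → ℝ → ℝ}
    (hprod : ∀ u ∈ Icc (0:ℝ) 1, ∀ v ∈ Icc (0:ℝ) 1, C u v = u * v) {u v : ℝ} (hu : u ∈ Icc 0 1)
    (hv : v ∈ Icc 0 1) : MarkovProduct C C u v = u * v := by
  have hright : ∀ t ∈ Ioo (0:ℝ) 1, deriv (fun s => C u s) t = u := fun t ht => by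
    have : (fun s => C u s) =ᶠ[𝓝 t] fun s => u * s :=
      eventually_of_mem (Icc_mem_nhds ht.1 ht.2) fun s hs => hprod u hu s hs
    rw [this.deriv_eq]
    simp
  have hleft : ∀ t ∈ Ioo (0:ℝ) 1, deriv (fun s => C s v) t = v := fun t ht => by
    have : (fun s => C s v) =ᶠ[𝓝 t] fun s => s * v :=
      eventually_of_mem (Icc_mem_nhds ht.1 ht.2) fun s hs => hprod s hs v hv
    rw [this.deriv_eq]
    simp
  rw [MarkovProduct, intervalIntegral.integral_of_le zero_le_one, integral_Ioc_eq_integral_Ioo,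
    setIntegral_congr_fun measurableSet_Ioo (g := fun _ => u * v)
      fun t ht => by simp only [hright t ht, hleft t ht],
    setIntegral_const, Real.volume_real_Ioo_of_le zero_le_one, sub_zero, one_smul]

lemma stochIncr_of_eq_mul {C : ℝ → ℝ → ℝ}
    (hprod : ∀ u ∈ Icc (0:ℝ) 1, ∀ v ∈ Icc (0:ℝ) 1, C u v = u * v) : StochIncr C :=
  fun v hv => ((concaveOn_id (convex_Icc 0 1)).smul hv.1).congr fun u hu => by
    simp [hprod u hu v hv, mul_comm]

theorem idempotent_stochMonotone_iff_pi (C : ℝ → ℝ → ℝ) (hC : IsCopula C)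
    (hdiag : ∀ v ∈ Ioo (0:ℝ) 1, C v v < v) :
    ((∀ u ∈ Icc (0:ℝ) 1, ∀ v ∈ Icc (0:ℝ) 1, MarkovProduct C C u v = C u v) ∧
        (StochIncr C ∨ StochDecr C)) ↔
      (∀ u ∈ Icc (0:ℝ) 1, ∀ v ∈ Icc (0:ℝ) 1, C u v = u * v) := by
  constructor
  · rintro ⟨hidem, hSI | hSD⟩ u hu v hv
    · exact hC.eq_mul_of_concaveOn_left hdiag (fun u hu => hidem u hu v hv) hv (hSI v hv) hu
    · exact hC.eq_mul_of_convexOn_left hdiag (fun u hu => hidem u hu v hv) hv (hSD v hv) hu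
  · intro hprod
    exact ⟨fun u hu v hv => (markovProduct_self_eq_mul hprod hu hv).trans (hprod u hu v hv).symm,
      Or.inl (stochIncr_of_eq_mul hprod)⟩
end

section
/- Every extreme value copula C(u,v) = exp( log(uv) · A(log u / log(uv)) ), where A : [0,1] → [1/2, 1] is convex with max(t, 1−t) ≤ A(t) ≤ 1 for all t, is stochastically increasing in both components; in particular u ↦ C(u,v) is concave for each fixed v ∈ (0,1]. -/
open MeasureTheory Set Filter

/-- The extreme value copula associated to a Pickands dependence function A. -/
noncomputable def EVCopula (A : ℝ → ℝ) (u v : ℝ) : ℝ :=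
  if u = 0 ∨ v = 0 then 0
  else Real.exp (Real.log (u * v) * A (Real.log u / Real.log (u * v)))

/-!
A convex `A` with `max t (1 - t) ≤ A ≤ 1` is touched from below at every point of `[0, 1]` by a
line `a * t + b * (1 - t) ≤ A t`, and the bounds force `a ∈ [0, 1]`. Since `log (u * v) ≤ 0`,
every such line gives `C(u, v) ≤ u ^ a * v ^ b`, with equality where the line touches `A` at
`log u / log (u * v)`. So `u ↦ C(u, v)` is a pointwise minimum of functions `u ↦ u ^ a * v ^ b`,
concave because `a ∈ [0, 1]`, and the minimum is attained everywhere; hence it is concave.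
Concavity in `v` follows by applying this to `t ↦ A (1 - t)`, which swaps the arguments of `C`.
-/

open Real

lemma concaveOn_of_forall_exists_concaveOn_ge_eq {E : Type*} [AddCommGroup E] [Module ℝ E]
    {s : Set E} {f : E → ℝ} (hs : Convex ℝ s)
    (h : ∀ z ∈ s, ∃ g : E → ℝ, ConcaveOn ℝ s g ∧ (∀ x ∈ s, f x ≤ g x) ∧ f z = g z) :
    ConcaveOn ℝ s f := by
  refine ⟨hs, fun x hx y hy a b ha hb hab => ?_⟩
  obtain ⟨g, hg, hfg, hfg_eq⟩ := h _ (hs hx hy ha hb hab)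
  calc a • f x + b • f y ≤ a • g x + b • g y := by
        simp only [smul_eq_mul]
        gcongr
        exacts [hfg x hx, hfg y hy]
    _ ≤ g (a • x + b • y) := hg.2 hx hy ha hb hab
    _ = f (a • x + b • y) := hfg_eq.symm

theorem ConvexOn.add_rightDeriv_mul_sub_le {S : Set ℝ} {f : ℝ → ℝ} {x y : ℝ}
    (hf : ConvexOn ℝ S f) (hx : x ∈ interior S) (hy : y ∈ S) :
    f x + derivWithin f (Ioi x) x * (y - x) ≤ f y := by
  rcases lt_trichotomy y x with hyx | rfl | hxy
  · have h := (hf.slope_le_leftDeriv_of_mem_interior hy hx hyx).trans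
      (hf.leftDeriv_le_rightDeriv_of_mem_interior hx)
    rw [slope_def_field, div_le_iff₀ (sub_pos.2 hyx)] at h
    linarith
  · simp
  · have h := hf.rightDeriv_le_slope_of_mem_interior hx hy hxy
    rw [slope_def_field, le_div_iff₀ (sub_pos.2 hxy)] at h
    linarith

structure IsPickands (A : ℝ → ℝ) : Prop where
  convexOn : ConvexOn ℝ (Icc (0:ℝ) 1) A
  max_le : ∀ t ∈ Icc (0:ℝ) 1, max t (1 - t) ≤ A t
  le_one : ∀ t ∈ Icc (0:ℝ) 1, A t ≤ 1

namespace IsPickands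

variable {A : ℝ → ℝ}

lemma map_zero (hA : IsPickands A) : A 0 = 1 :=
  le_antisymm (hA.le_one 0 (left_mem_Icc.2 zero_le_one)) <| by
    simpa using hA.max_le 0 (left_mem_Icc.2 zero_le_one)

lemma map_one (hA : IsPickands A) : A 1 = 1 :=
  le_antisymm (hA.le_one 1 (right_mem_Icc.2 zero_le_one)) <| by
    simpa using hA.max_le 1 (right_mem_Icc.2 zero_le_one)

lemma comp_one_sub (hA : IsPickands A) : IsPickands (fun t => A (1 - t)) where
  convexOn := by
    refine ⟨convex_Icc 0 1, fun x hx y hy a b ha hb hab => ?_⟩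
    have hx' : 1 - x ∈ Icc (0:ℝ) 1 := ⟨by linarith [hx.2], by linarith [hx.1]⟩
    have hy' : 1 - y ∈ Icc (0:ℝ) 1 := ⟨by linarith [hy.2], by linarith [hy.1]⟩
    have hmix : 1 - (a • x + b • y) = a • (1 - x) + b • (1 - y) := by
      simp only [smul_eq_mul]; linear_combination -hab
    simpa only [hmix] using hA.convexOn.2 hx' hy' ha hb hab
  max_le t ht := by
    simpa only [max_comm, sub_sub_cancel] using
      hA.max_le (1 - t) ⟨by linarith [ht.2], by linarith [ht.1]⟩
  le_one t ht := hA.le_one (1 - t) ⟨by linarith [ht.2], by linarith [ht.1]⟩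

theorem exists_affine_le_eq (hA : IsPickands A) {t₀ : ℝ} (ht₀ : t₀ ∈ Icc (0:ℝ) 1) :
    ∃ a ∈ Icc (0:ℝ) 1, ∃ b : ℝ,
      (∀ t ∈ Icc (0:ℝ) 1, a * t + b * (1 - t) ≤ A t) ∧ a * t₀ + b * (1 - t₀) = A t₀ := by
  rcases ht₀.1.eq_or_lt with rfl | h₀
  · refine ⟨0, left_mem_Icc.2 zero_le_one, 1, fun t ht => ?_, by simp [hA.map_zero]⟩
    linarith [le_max_right t (1 - t), hA.max_le t ht]
  rcases ht₀.2.eq_or_lt with rfl | h₁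
  · refine ⟨1, right_mem_Icc.2 zero_le_one, 0, fun t ht => ?_, by simp [hA.map_one]⟩
    linarith [le_max_left t (1 - t), hA.max_le t ht]
  set σ := derivWithin A (Ioi t₀) t₀
  have hline : ∀ t ∈ Icc (0:ℝ) 1, A t₀ + σ * (t - t₀) ≤ A t := fun t ht =>
    hA.convexOn.add_rightDeriv_mul_sub_le (by rw [interior_Icc]; exact ⟨h₀, h₁⟩) ht
  have hline₀ := hline 0 (left_mem_Icc.2 zero_le_one)
  have hline₁ := hline 1 (right_mem_Icc.2 zero_le_one)
  refine ⟨A t₀ + σ * (1 - t₀), ⟨?_, ?_⟩, A t₀ - σ * t₀, fun t ht => ?_, by ring⟩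
  · nlinarith [le_max_right t₀ (1 - t₀), hA.max_le t₀ ht₀, hA.map_zero]
  · linarith [hA.map_one]
  · linarith [hline t ht]

end IsPickands

section EVCopula

variable {A : ℝ → ℝ} {u v : ℝ}

lemma evCopula_of_ne_zero (hu : u ≠ 0) (hv : v ≠ 0) :
    EVCopula A u v = exp (log (u * v) * A (log u / log (u * v))) := by
  simp [EVCopula, hu, hv]

lemma evCopula_swap (A : ℝ → ℝ) (u v : ℝ) :
    EVCopula A u v = EVCopula (fun t => A (1 - t)) v u := by
  by_cases h : u = 0 ∨ v = 0
  · simp only [EVCopula, h, h.symm, if_true]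
  push Not at h
  rw [evCopula_of_ne_zero h.1 h.2, evCopula_of_ne_zero h.2 h.1, mul_comm v u]
  by_cases hL : log (u * v) = 0
  · simp [hL]
  rw [log_mul h.1 h.2] at hL ⊢
  congr 3
  field_simp
  ring

lemma div_log_mul_mem_Icc (hu : u ∈ Ioc (0:ℝ) 1) (hv : v ∈ Ioc (0:ℝ) 1) :
    log u / log (u * v) ∈ Icc (0:ℝ) 1 := by
  have hu' := log_nonpos hu.1.le hu.2
  have hv' := log_nonpos hv.1.le hv.2
  rw [log_mul hu.1.ne' hv.1.ne']
  exact ⟨div_nonneg_of_nonpos hu' (by linarith), div_le_one_of_ge (by linarith) (by linarith)⟩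

-- When `log (u * v) = 0` both logarithms vanish, so the junk value `x / 0 = 0` is harmless.
lemma log_mul_mul_div_log_mul (hu : u ∈ Ioc (0:ℝ) 1) (hv : v ∈ Ioc (0:ℝ) 1) :
    log (u * v) * (log u / log (u * v)) = log u := by
  by_cases hL : log (u * v) = 0
  · have hu' : log u = 0 := by
      rw [log_mul hu.1.ne' hv.1.ne'] at hL
      linarith [log_nonpos hu.1.le hu.2, log_nonpos hv.1.le hv.2]
    rw [hL, hu', zero_mul]
  · exact mul_div_cancel₀ _ hL

lemma rpow_mul_rpow_eq_exp (hu : u ∈ Ioc (0:ℝ) 1) (hv : v ∈ Ioc (0:ℝ) 1) (a b : ℝ) :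
    u ^ a * v ^ b =
      exp (log (u * v) * (a * (log u / log (u * v)) + b * (1 - log u / log (u * v)))) := by
  rw [rpow_def_of_pos hu.1, rpow_def_of_pos hv.1, ← exp_add]
  have h := log_mul_mul_div_log_mul hu hv
  have hL := log_mul hu.1.ne' hv.1.ne'
  congr 1
  linear_combination (b - a) * h - b * hL

lemma evCopula_le_rpow_mul_rpow {a b : ℝ} (hle : ∀ t ∈ Icc (0:ℝ) 1, a * t + b * (1 - t) ≤ A t)
    (hu : u ∈ Icc (0:ℝ) 1) (hv : v ∈ Icc (0:ℝ) 1) :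
    EVCopula A u v ≤ u ^ a * v ^ b := by
  by_cases h : u = 0 ∨ v = 0
  · rw [EVCopula, if_pos h]
    exact mul_nonneg (rpow_nonneg hu.1 a) (rpow_nonneg hv.1 b)
  push Not at h
  have hu' : u ∈ Ioc (0:ℝ) 1 := ⟨hu.1.lt_of_ne' h.1, hu.2⟩
  have hv' : v ∈ Ioc (0:ℝ) 1 := ⟨hv.1.lt_of_ne' h.2, hv.2⟩
  rw [evCopula_of_ne_zero h.1 h.2, rpow_mul_rpow_eq_exp hu' hv']
  refine exp_le_exp.2 (mul_le_mul_of_nonpos_left (hle _ (div_log_mul_mem_Icc hu' hv')) ?_)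
  exact log_nonpos (mul_pos hu'.1 hv'.1).le (mul_le_one₀ hu.2 hv.1 hv.2)

lemma evCopula_eq_rpow_mul_rpow {a b : ℝ} (hu : u ∈ Ioc (0:ℝ) 1) (hv : v ∈ Ioc (0:ℝ) 1)
    (heq : a * (log u / log (u * v)) + b * (1 - log u / log (u * v)) =
      A (log u / log (u * v))) :
    EVCopula A u v = u ^ a * v ^ b := by
  rw [evCopula_of_ne_zero hu.1.ne' hv.1.ne', rpow_mul_rpow_eq_exp hu hv, heq]

theorem IsPickands.concaveOn_evCopula_left (hA : IsPickands A) (hv : v ∈ Ioc (0:ℝ) 1) :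
    ConcaveOn ℝ (Icc (0:ℝ) 1) (fun u => EVCopula A u v) := by
  refine concaveOn_of_forall_exists_concaveOn_ge_eq (convex_Icc 0 1) fun u₀ hu₀ => ?_
  obtain ⟨a, ha, b, hle, heq⟩ : ∃ a ∈ Icc (0:ℝ) 1, ∃ b : ℝ,
      (∀ t ∈ Icc (0:ℝ) 1, a * t + b * (1 - t) ≤ A t) ∧ EVCopula A u₀ v = u₀ ^ a * v ^ b := by
    rcases hu₀.1.eq_or_lt with rfl | hu₀pos
    · refine ⟨1, right_mem_Icc.2 zero_le_one, 0, fun t ht => ?_, by simp [EVCopula]⟩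
      linarith [le_max_left t (1 - t), hA.max_le t ht]
    · have hu₀' : u₀ ∈ Ioc (0:ℝ) 1 := ⟨hu₀pos, hu₀.2⟩
      obtain ⟨a, ha, b, hle, heq⟩ := hA.exists_affine_le_eq (div_log_mul_mem_Icc hu₀' hv)
      exact ⟨a, ha, b, hle, evCopula_eq_rpow_mul_rpow hu₀' hv heq⟩
  refine ⟨fun u => u ^ a * v ^ b, ?_, fun u hu => evCopula_le_rpow_mul_rpow hle hu ⟨hv.1.le, hv.2⟩,
    heq⟩
  simpa only [smul_eq_mul, mul_comm] using ((concaveOn_rpow ha.1 ha.2).subset Icc_subset_Ici_self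
    (convex_Icc 0 1)).smul (rpow_nonneg hv.1.le b)

end EVCopula

theorem evCopula_stochIncr (A : ℝ → ℝ) (hconv : ConvexOn ℝ (Icc (0:ℝ) 1) A)
    (hA : ∀ t ∈ Icc (0:ℝ) 1, max t (1 - t) ≤ A t ∧ A t ≤ 1) :
    (∀ v ∈ Ioc (0:ℝ) 1, ConcaveOn ℝ (Icc (0:ℝ) 1) (fun u => EVCopula A u v)) ∧
    (∀ u ∈ Ioc (0:ℝ) 1, ConcaveOn ℝ (Icc (0:ℝ) 1) (fun v => EVCopula A u v)) := by
  have hP : IsPickands A := ⟨hconv, fun t ht => (hA t ht).1, fun t ht => (hA t ht).2⟩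
  refine ⟨fun v hv => hP.concaveOn_evCopula_left hv, fun u hu => ?_⟩
  simpa only [evCopula_swap A u] using hP.comp_one_sub.concaveOn_evCopula_left hu
end
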